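/- Let θ: ℝ → ℝ be 1-periodic with Fourier coefficients g(m) satisfying |g(m)| ≤ (1/|m|)·(2Z·r/(π|m|))^r for m ≠ 0, where r = ⌊log N⌋ and Z ≤ N^A for some fixed A. Then the tail of the Fourier series satisfies Σ_{|m| > Z (log N)^4} |g(m)| ≪ N^{-log log N} for sufficiently large N. -/

import Mathlib

open Real

/-- The integer sum `∑_{m ∈ ℤ} 1/|m|²` (with `1/0 = 0`) equals `π²/3`. -/
lemma stmt16_basel : HasSum (fun m : ℤ => 1 / |(m : ℝ)| ^ 2) (π ^ 2 / 3) := by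
  have h1 : HasSum (fun n : ℕ => (1 : ℝ) / (n : ℝ) ^ 2) (π ^ 2 / 6) := hasSum_zeta_two
  have hpos : HasSum (fun n : ℕ => (fun m : ℤ => 1 / |(m : ℝ)| ^ 2) (n : ℤ)) (π ^ 2 / 6) := by
    refine h1.congr_fun fun n => ?_
    simp only [Int.cast_natCast, abs_of_nonneg (Nat.cast_nonneg n : (0:ℝ) ≤ n)]
  have hneg : HasSum (fun n : ℕ => (fun m : ℤ => 1 / |(m : ℝ)| ^ 2) (-(n : ℤ))) (π ^ 2 / 6) := by
    refine h1.congr_fun fun n => ?_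
    simp only [Int.cast_neg, Int.cast_natCast, abs_neg,
      abs_of_nonneg (Nat.cast_nonneg n : (0:ℝ) ≤ n)]
  have h : HasSum (fun m : ℤ => 1 / |(m : ℝ)| ^ 2)
      (π ^ 2 / 6 + π ^ 2 / 6 - 1 / |((0:ℤ) : ℝ)| ^ 2) :=
    HasSum.of_nat_of_neg hpos hneg
  have he : π ^ 2 / 6 + π ^ 2 / 6 - 1 / |((0:ℤ) : ℝ)| ^ 2 = π ^ 2 / 3 := by
    norm_num; ring
  rwa [he] at h

set_option maxHeartbeats 1000000 in
/-- Fourier tail bound: if `|g(m)| ≤ (1/|m|)(2Zr/(π|m|))^r` with `r = ⌊log N⌋` and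
`Z ≤ N^A`, then `Σ_{|m| > Z(log N)^4} |g(m)| ≪ N^{-log log N}` for large `N`. -/
theorem stmt_16 (A : ℝ) (hA : 0 < A) :
    ∃ C > (0 : ℝ), ∃ N₀ : ℝ, ∀ N : ℝ, N₀ ≤ N → ∀ Z : ℕ, 0 < Z → (Z : ℝ) ≤ N ^ A →
      ∀ g : ℤ → ℂ,
        (∀ m : ℤ, m ≠ 0 →
          ‖g m‖ ≤ (1 / |(m : ℝ)|) *
            (2 * (Z : ℝ) * (⌊Real.log N⌋ : ℝ) / (Real.pi * |(m : ℝ)|)) ^ ⌊Real.log N⌋) →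
        (∑' m : ℤ, if (Z : ℝ) * (Real.log N) ^ 4 < |(m : ℝ)| then ‖g m‖ else 0) ≤
          C * N ^ (-Real.log (Real.log N)) := by
  refine ⟨1, one_pos, Real.exp (Real.exp (2 * A + 20)), fun N hN Z hZ hZN g hg => ?_⟩
  set L := Real.log N with hLdef
  set LL := Real.log L with hLLdef
  have hN0 : (0 : ℝ) < N := lt_of_lt_of_le (Real.exp_pos _) hN
  have hLge : Real.exp (2 * A + 20) ≤ L := (Real.le_log_iff_exp_le hN0).mpr hN
  have hL0 : (0 : ℝ) < L := lt_of_lt_of_le (Real.exp_pos _) hLge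
  have hLL : 2 * A + 20 ≤ LL := (Real.le_log_iff_exp_le hL0).mpr hLge
  have hLL0 : (0 : ℝ) < LL := by nlinarith
  have hLbig : 2 * A + 21 ≤ L := le_trans (by linarith [Real.add_one_le_exp (2 * A + 20)]) hLge
  have hL21 : (21 : ℝ) ≤ L := by linarith
  have hLLL : LL + 1 ≤ L := by
    have := Real.add_one_le_exp LL
    rwa [Real.exp_log hL0] at this
  -- the floor as a natural number
  set n : ℕ := ⌊L⌋.toNat with hndef
  have hfloor : (⌊L⌋ : ℤ) = (n : ℤ) := by
    rw [hndef, Int.toNat_of_nonneg (Int.floor_nonneg.mpr hL0.le)]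
  have hnL : (n : ℝ) ≤ L := by
    have := Int.floor_le L
    rw [hfloor] at this; exact_mod_cast this
  have hnL' : L - 1 ≤ (n : ℝ) := by
    have := Int.sub_one_lt_floor L
    rw [hfloor] at this; push_cast at this; linarith
  have hn2 : 2 ≤ n := by
    have : (2 : ℝ) ≤ (n : ℝ) := by linarith
    exact_mod_cast this
  have hn1 : (1 : ℝ) ≤ (n : ℝ) := by linarith
  -- key quantities
  set M : ℝ := (Z : ℝ) * L ^ 4 with hMdef
  have hZ1 : (1 : ℝ) ≤ (Z : ℝ) := by exact_mod_cast hZ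
  have hM1 : (1 : ℝ) ≤ M := by
    have h14 : (1 : ℝ) ^ 4 ≤ L ^ 4 := pow_le_pow_left₀ (by norm_num) (by linarith) 4
    have : (1 : ℝ) ≤ L ^ 4 := by norm_num at h14; linarith
    nlinarith
  set q : ℝ := 2 * (n : ℝ) / (π * L ^ 4) with hqdef
  have hπ : (0 : ℝ) < π := Real.pi_pos
  have hq0 : 0 < q := by positivity
  have hq : q ≤ Real.exp (-(3 * LL)) := by
    have hexpLL : Real.exp LL = L := Real.exp_log hL0
    have h3 : Real.exp (3 * LL) = L ^ 3 := by
      rw [show (3 : ℝ) * LL = (3 : ℕ) * LL by norm_num, Real.exp_nat_mul, hexpLL]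
    rw [Real.exp_neg, h3]
    rw [hqdef, div_le_iff₀ (by positivity)]
    have h2π : (2 : ℝ) ≤ π := by nlinarith [Real.pi_gt_three]
    have h2n : 2 * (n : ℝ) ≤ π * L := by nlinarith
    have heq : (L ^ 3)⁻¹ * (π * L ^ 4) = π * L := by
      field_simp
    rw [heq]; exact h2n
  set K : ℝ := q ^ n * M ^ 2 with hKdef
  have hK0 : 0 ≤ K := by positivity
  -- pointwise bound
  have hpt : ∀ m : ℤ, (if (Z : ℝ) * L ^ 4 < |(m : ℝ)| then ‖g m‖ else 0) ≤
      K * (1 / |(m : ℝ)| ^ 2) := by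
    intro m
    by_cases hc : (Z : ℝ) * L ^ 4 < |(m : ℝ)|
    · rw [if_pos hc]
      have hm1 : (1 : ℝ) ≤ |(m : ℝ)| := le_trans hM1 (le_of_lt hc)
      have hm0R : (0 : ℝ) < |(m : ℝ)| := by linarith
      have hm0 : m ≠ 0 := by
        intro h; rw [h] at hm0R; simp at hm0R
      have hbound := hg m hm0
      rw [hfloor, zpow_natCast] at hbound
      have hx : 2 * (Z : ℝ) * ((n : ℤ) : ℝ) / (π * |(m : ℝ)|) = q * (M / |(m : ℝ)|) := by
        rw [hqdef, hMdef]
        field_simp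
        push_cast; ring
      rw [hx] at hbound
      have hMm : M / |(m : ℝ)| ≤ 1 := by
        rw [div_le_one hm0R]; exact hc.le
      have hMm0 : 0 ≤ M / |(m : ℝ)| := by positivity
      have hpow : (q * (M / |(m : ℝ)|)) ^ n ≤ q ^ n * (M / |(m : ℝ)|) ^ 2 := by
        rw [mul_pow]
        have : (M / |(m : ℝ)|) ^ n ≤ (M / |(m : ℝ)|) ^ 2 :=
          pow_le_pow_of_le_one hMm0 hMm hn2
        exact mul_le_mul_of_nonneg_left this (by positivity)
      calc ‖g m‖ ≤ (1 / |(m : ℝ)|) * (q * (M / |(m : ℝ)|)) ^ n := hbound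
        _ ≤ (1 / |(m : ℝ)|) * (q ^ n * (M / |(m : ℝ)|) ^ 2) :=
            mul_le_mul_of_nonneg_left hpow (by positivity)
        _ = (q ^ n * M ^ 2) * (1 / |(m : ℝ)| ^ 2) * (1 / |(m : ℝ)|) := by
            field_simp
        _ ≤ (q ^ n * M ^ 2) * (1 / |(m : ℝ)| ^ 2) * 1 := by
            apply mul_le_mul_of_nonneg_left _ (by positivity)
            rw [div_le_one hm0R] at *
            linarith
        _ = K * (1 / |(m : ℝ)| ^ 2) := by rw [hKdef]; ring
    · rw [if_neg hc]; positivity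
  -- summability and sum bound
  have hsum2 : HasSum (fun m : ℤ => K * (1 / |(m : ℝ)| ^ 2)) (K * (π ^ 2 / 3)) :=
    stmt16_basel.mul_left K
  have hS2 : Summable (fun m : ℤ => K * (1 / |(m : ℝ)| ^ 2)) := hsum2.summable
  have hS1 : Summable (fun m : ℤ => if (Z : ℝ) * L ^ 4 < |(m : ℝ)| then ‖g m‖ else 0) := by
    refine Summable.of_nonneg_of_le (fun m => ?_) hpt hS2
    by_cases hc : (Z : ℝ) * L ^ 4 < |(m : ℝ)| <;> simp [hc]
  have hmain : (∑' m : ℤ, if (Z : ℝ) * L ^ 4 < |(m : ℝ)| then ‖g m‖ else 0) ≤ K * (π ^ 2 / 3) := by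
    rw [← hsum2.tsum_eq]
    exact Summable.tsum_le_tsum hpt hS1 hS2
  refine le_trans hmain ?_
  rw [one_mul]
  -- final exponential estimate
  have hexpLL : Real.exp LL = L := Real.exp_log hL0
  have hNA : (N : ℝ) ^ A = Real.exp (L * A) := by
    rw [Real.rpow_def_of_pos hN0]
  have hNLL : N ^ (-LL) = Real.exp (-(L * LL)) := by
    rw [Real.rpow_def_of_pos hN0, ← hLdef]; ring_nf
  have hqn : q ^ n ≤ Real.exp (-(3 * LL) * (n : ℝ)) := by
    calc q ^ n ≤ Real.exp (-(3 * LL)) ^ n := pow_le_pow_left₀ hq0.le hq n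
      _ = Real.exp ((n : ℝ) * -(3 * LL)) := (Real.exp_nat_mul _ n).symm
      _ = Real.exp (-(3 * LL) * (n : ℝ)) := by ring_nf
  have hM : M ≤ Real.exp (L * A + 4 * LL) := by
    have hL4 : L ^ 4 = Real.exp (4 * LL) := by
      rw [show (4 : ℝ) * LL = (4 : ℕ) * LL by norm_num, Real.exp_nat_mul, hexpLL]
    rw [Real.exp_add, ← hNA, ← hL4]
    exact mul_le_mul_of_nonneg_right hZN (by positivity)
  have hM2 : M ^ 2 ≤ Real.exp (2 * (L * A + 4 * LL)) := by
    have : M ^ 2 ≤ Real.exp (L * A + 4 * LL) ^ 2 := pow_le_pow_left₀ (by linarith) hM 2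
    calc M ^ 2 ≤ Real.exp (L * A + 4 * LL) ^ 2 := this
      _ = Real.exp ((2 : ℕ) * (L * A + 4 * LL)) := (Real.exp_nat_mul _ 2).symm
      _ = Real.exp (2 * (L * A + 4 * LL)) := by norm_num
  have hπ4 : π ^ 2 / 3 ≤ Real.exp 2 := by
    have h1 : π ^ 2 / 3 ≤ 6 := by nlinarith [Real.pi_le_four, Real.pi_pos]
    have h2 : (6 : ℝ) ≤ Real.exp 2 := by
      have h3 := Real.exp_one_gt_d9
      have h4 : Real.exp 2 = Real.exp 1 ^ 2 := by
        rw [← Real.exp_nat_mul]; norm_num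
      nlinarith
    linarith
  calc K * (π ^ 2 / 3)
      ≤ (Real.exp (-(3 * LL) * (n : ℝ)) * Real.exp (2 * (L * A + 4 * LL))) * Real.exp 2 := by
        rw [hKdef]
        apply mul_le_mul _ hπ4 (by positivity) (by positivity)
        exact mul_le_mul hqn hM2 (by positivity) (by positivity)
    _ = Real.exp (-(3 * LL) * (n : ℝ) + 2 * (L * A + 4 * LL) + 2) := by
        rw [← Real.exp_add, ← Real.exp_add]
    _ ≤ Real.exp (-(L * LL)) := by
        rw [Real.exp_le_exp]
        have h1 : -(3 * LL) * (n : ℝ) ≤ -(3 * LL) * (L - 1) := by nlinarith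
        have hprod : L * (2 * A + 20) ≤ L * LL := mul_le_mul_of_nonneg_left hLL hL0.le
        have hp0 : (0:ℝ) ≤ L * LL := by positivity
        nlinarith [h1, hprod, hp0, hLLL, hL21]
    _ = N ^ (-LL) := hNLL.symm
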